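/- Every directed path in G that starts at g_{n−1}, ends at a vertex of C ∪ R⁻¹(E(G)), and all of whose internal vertices lie outside C ∪ R⁻¹(E(G)), ends at some z_i with i ∈ {1,…,m}, and its sequence of edges is (g_{n−1},a_n) followed by either (a_n,b_n),(b_n,e_n),(e_n,d_n) or (a_n,c_n),(c_n,f_n),(f_n,d_n), followed by (d_n,g_n),(g_n,x₁),(x₁,x₂),…,(x_{i−1},x_i),(x_i,y_i),(y_i,z_i). -/

import Mathlib

namespace PhutballQBF

/-- A literal: a variable `xₗ` (`pos l`) or its negation `¬xₗ` (`neg l`). -/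
inductive Lit where
  | pos (l : ℕ)
  | neg (l : ℕ)
deriving DecidableEq

/-- The index of the variable occurring in a literal. -/
def Lit.var : Lit → ℕ
  | .pos l => l
  | .neg l => l

/-- Evaluation of a literal under a Boolean assignment. -/
def Lit.eval (σ : ℕ → Bool) : Lit → Bool
  | .pos l => σ l
  | .neg l => !(σ l)

/-- Well-formedness of the 3CNF `F = F₁ ∧ ⋯ ∧ F_m`: the literal `l_{i,j}` (for
`1 ≤ i ≤ m`, `1 ≤ j ≤ 3`) mentions one of the variables `x₁, …, xₙ`. -/
def LitWF (n m : ℕ) (lit : ℕ → ℕ → Lit) : Prop :=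
  ∀ i j, 1 ≤ i → i ≤ m → 1 ≤ j → j ≤ 3 → 1 ≤ (lit i j).var ∧ (lit i j).var ≤ n

/-- The clause `Fᵢ = (l_{i,1} ∨ l_{i,2} ∨ l_{i,3})` evaluates to true under `σ`. -/
def ClauseTrue (lit : ℕ → ℕ → Lit) (i : ℕ) (σ : ℕ → Bool) : Prop :=
  ∃ j, 1 ≤ j ∧ j ≤ 3 ∧ (lit i j).eval σ = true

/-- The 3CNF formula `F = F₁ ∧ ⋯ ∧ F_m` evaluates to true under `σ`. -/
def FTrue (lit : ℕ → ℕ → Lit) (m : ℕ) (σ : ℕ → Bool) : Prop :=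
  ∀ i, 1 ≤ i → i ≤ m → ClauseTrue lit i σ

/-- `QAux P i k σ`: the quantified statement with `k` variables `x_i, …, x_{i+k-1}`
still to be quantified (existentially when the index is odd, universally when even),
the remaining variables having the values recorded in `σ`. -/
def QAux (P : (ℕ → Bool) → Prop) : ℕ → ℕ → (ℕ → Bool) → Prop
  | _, 0, σ => P σ
  | i, k + 1, σ =>
      if i % 2 = 1 then ∃ b, QAux P (i + 1) k (Function.update σ i b)
      else ∀ b, QAux P (i + 1) k (Function.update σ i b)

/-- Truth of the restricted quantified Boolean formula
`Q = ∃x₁ ∀x₂ ∃x₃ ⋯ ∀xₙ F(x₁, …, xₙ)`. -/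
def QTrue (n m : ℕ) (lit : ℕ → ℕ → Lit) : Prop :=
  QAux (FTrue lit m) 1 n (fun _ => false)

/-- The vertices of the graph `G` built from `Q` (with natural-number indices;
`g 0` is the extra vertex `g₀`). -/
inductive Vtx where
  | a (i : ℕ) | b (i : ℕ) | c (i : ℕ) | d (i : ℕ) | e (i : ℕ) | f (i : ℕ) | g (i : ℕ)
  | x (i : ℕ) | y (i : ℕ) | z (i : ℕ) | w (i : ℕ) (j : ℕ)
deriving DecidableEq

/-- A directed edge. -/
abbrev Edge := Vtx × Vtx

/-- The edge set `E(G)` of the graph `G` constructed from `Q` (with `n` variables and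
`m` clauses): the variable components `G(xᵢ)`, the connecting edges `(gᵢ, aᵢ₊₁)` for
`i = 0, …, n-1`, the edge `(gₙ, x₁)`, and the formula component `G(F)`. -/
def EG (n m : ℕ) : Set Edge :=
  { p | (∃ i, 1 ≤ i ∧ i ≤ n ∧
          (p = (Vtx.a i, Vtx.b i) ∨ p = (Vtx.a i, Vtx.c i) ∨ p = (Vtx.b i, Vtx.e i) ∨
           p = (Vtx.c i, Vtx.f i) ∨ p = (Vtx.e i, Vtx.d i) ∨ p = (Vtx.f i, Vtx.d i) ∨
           p = (Vtx.d i, Vtx.g i))) ∨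
        (∃ i, i ≤ n - 1 ∧ p = (Vtx.g i, Vtx.a (i + 1))) ∨
        p = (Vtx.g n, Vtx.x 1) ∨
        (∃ i, 1 ≤ i ∧ i ≤ m ∧
          (p = (Vtx.x i, Vtx.y i) ∨ p = (Vtx.y i, Vtx.z i) ∨ p = (Vtx.z i, Vtx.w i 1) ∨
           p = (Vtx.w i 1, Vtx.w i 2) ∨ p = (Vtx.w i 2, Vtx.w i 3))) ∨
        (∃ i, 1 ≤ i ∧ i ≤ m - 1 ∧ p = (Vtx.x i, Vtx.x (i + 1))) }

/-- The set `C = {g₀, g₁, …, g_{n-1}} ∪ {z₁, …, z_m}`. -/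
def Cset (n m : ℕ) : Set Vtx :=
  { v | (∃ i, i ≤ n - 1 ∧ v = Vtx.g i) ∨ (∃ i, 1 ≤ i ∧ i ≤ m ∧ v = Vtx.z i) }

/-- The relation `R ⊆ V(G) × E(G)`: `(w_{i,j}, (bₗ, eₗ)) ∈ R` iff `l_{i,j} = xₗ`, and
`(w_{i,j}, (cₗ, fₗ)) ∈ R` iff `l_{i,j} = ¬xₗ`. -/
def Rrel (lit : ℕ → ℕ → Lit) (m : ℕ) : Set (Vtx × Edge) :=
  { p | ∃ i j, 1 ≤ i ∧ i ≤ m ∧ 1 ≤ j ∧ j ≤ 3 ∧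
        ((∃ l, lit i j = Lit.pos l ∧ p = (Vtx.w i j, (Vtx.b l, Vtx.e l))) ∨
         (∃ l, lit i j = Lit.neg l ∧ p = (Vtx.w i j, (Vtx.c l, Vtx.f l)))) }

/-- `Rinv R E = R⁻¹(E)`: the vertices pointing some edge of `E`. -/
def Rinv (R : Set (Vtx × Edge)) (E : Set Edge) : Set Vtx :=
  { v | ∃ e ∈ E, (v, e) ∈ R }

/-- The set of (directed) edges traversed by a path given as its list of vertices. -/
def pathEdges (p : List Vtx) : Set Edge := { e | e ∈ p.zip p.tail }

/-- A legal move of the graph game from active vertex `u ∈ C` with current edge set `E`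
along the directed path `p` (a list of at least two pairwise distinct vertices whose
consecutive pairs are edges of `E`), ending at a vertex `v ∈ C ∪ R⁻¹(E)`, with all
internal vertices of `p` outside `C ∪ R⁻¹(E)`; the resulting edge set `E'` is obtained
by deleting the edges of `p` from `E`. -/
def LegalMoveVia (C : Set Vtx) (R : Set (Vtx × Edge))
    (u : Vtx) (E : Set Edge) (v : Vtx) (E' : Set Edge) (p : List Vtx) : Prop :=
  u ∈ C ∧ v ∈ C ∪ Rinv R E ∧
  2 ≤ p.length ∧ p.Nodup ∧
  p.head? = some u ∧ p.getLast? = some v ∧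
  List.Chain' (fun a b => (a, b) ∈ E) p ∧
  (∀ w ∈ (p.drop 1).dropLast, w ∉ C ∪ Rinv R E) ∧
  E' = E \ pathEdges p

/-- A legal move from `(u, E)` to `(v, E')` (along some path). -/
def LegalMove (C : Set Vtx) (R : Set (Vtx × Edge))
    (u : Vtx) (E : Set Edge) (v : Vtx) (E' : Set Edge) : Prop :=
  ∃ p, LegalMoveVia C R u E v E' p

/-- `MoverWins C R true u E` says that the player to move at the position with active
vertex `u` and current edge set `E` has a winning strategy; `MoverWins C R false u E`
says that the player to move loses whatever he does (in particular, if he has no legal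
move he loses immediately; a move to a vertex of `R⁻¹(E)` wins the game for the mover). -/
inductive MoverWins (C : Set Vtx) (R : Set (Vtx × Edge)) : Bool → Vtx → Set Edge → Prop
  | winsNow {u E v E'} : LegalMove C R u E v E' → v ∈ Rinv R E →
      MoverWins C R true u E
  | winsLater {u E v E'} : LegalMove C R u E v E' → MoverWins C R false v E' →
      MoverWins C R true u E
  | loses {u E} :
      (∀ v E', LegalMove C R u E v E' → v ∉ Rinv R E) →
      (∀ v E', LegalMove C R u E v E' → MoverWins C R true v E') →
      MoverWins C R false u E

/-- The two players of the graph game. -/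
inductive Player where
  | ex | fa
deriving DecidableEq

/-- The opponent of a player. -/
def Player.other : Player → Player
  | .ex => .fa
  | .fa => .ex

/-- A (maximal) play of the graph game on `(G, C, s, R)` starting from active vertex `s`
and edge set `E0`, with the ∃-player moving first.  `act k` and `edg k` are the active
vertex and edge set after `k` moves, `turn k` is the player who makes the `(k+1)`-st
move, and `len` is the total number of moves.  The play stops either because its last
move reached a vertex of `R⁻¹(E)` (the mover wins) or because the player to move has no
legal move (he loses); before that, no move may end in `R⁻¹(E)` without stopping. -/
structure Play (C : Set Vtx) (R : Set (Vtx × Edge)) (s : Vtx) (E0 : Set Edge) where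
  len : ℕ
  act : ℕ → Vtx
  edg : ℕ → Set Edge
  turn : ℕ → Player
  init_act : act 0 = s
  init_edg : edg 0 = E0
  init_turn : turn 0 = Player.ex
  turn_alt : ∀ k, turn (k + 1) = (turn k).other
  step : ∀ k, k < len → LegalMove C R (act k) (edg k) (act (k + 1)) (edg (k + 1))
  not_over : ∀ k, k + 1 < len → act (k + 1) ∉ Rinv R (edg k)
  maximal : (0 < len ∧ act len ∈ Rinv R (edg (len - 1))) ∨
            (∀ v E', ¬ LegalMove C R (act len) (edg len) v E')


/-!
From `g_{n-1}` on, the graph offers a choice only at `a_n` (go to `b_n` or `c_n`) and at each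
`x_i` (go to `y_i` or `x_{i+1}`); every other vertex met has a unique successor. None of these
vertices lies in `C ∪ R⁻¹(E(G))` except the successor `z_i` of `y_i`, which lies in `C`. So a
path that stops at the first vertex of `C ∪ R⁻¹(E(G))` is forced to have the stated shape.
-/

section FirstHitPath

variable {α : Type*} (E : Set (α × α)) (S : Set α)

def IsFirstHitPath (u v : α) (p : List α) : Prop :=
  2 ≤ p.length ∧ p.head? = some u ∧ p.getLast? = some v ∧ v ∈ S ∧
    p.IsChain (fun a b => (a, b) ∈ E) ∧ ∀ w ∈ (p.drop 1).dropLast, w ∉ S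

variable {E S} {u v : α} {q : List α}

theorem IsFirstHitPath.exists_eq_cons (h : IsFirstHitPath E S u v (u :: q)) :
    ∃ w r, q = w :: r ∧ (u, w) ∈ E ∧
      (w ∈ S ∧ r = [] ∧ w = v ∨ w ∉ S ∧ IsFirstHitPath E S w v (w :: r)) := by
  obtain ⟨hlen, -, hlast, hv, hchain, hint⟩ := h
  obtain ⟨w, r, rfl⟩ := List.exists_cons_of_length_pos (l := q) (by simp at hlen; omega)
  rw [List.isChain_cons_cons] at hchain
  refine ⟨w, r, rfl, hchain.1, ?_⟩
  cases r with
  | nil =>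
    simp only [List.getLast?_cons_cons, List.getLast?_singleton, Option.some_inj] at hlast
    exact .inl ⟨hlast ▸ hv, rfl, hlast⟩
  | cons x r =>
    simp only [List.drop_one, List.tail_cons, List.dropLast_cons_cons, List.mem_cons,
      forall_eq_or_imp] at hint
    refine .inr ⟨hint.1, by simp, rfl, ?_, hv, hchain.2, ?_⟩
    · simpa only [List.getLast?_cons_cons] using hlast
    · simpa only [List.drop_one, List.tail_cons] using hint.2

theorem IsFirstHitPath.exists_eq_cons_of_forall_succ_eq {w : α}
    (h : IsFirstHitPath E S u v (u :: q)) (hsucc : ∀ w', (u, w') ∈ E → w' = w) (hw : w ∉ S) :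
    ∃ r, q = w :: r ∧ IsFirstHitPath E S w v (w :: r) := by
  obtain ⟨w', r, rfl, hE, ⟨hw', -⟩ | ⟨-, hr⟩⟩ := h.exists_eq_cons <;> obtain rfl := hsucc w' hE
  · exact absurd hw' hw
  · exact ⟨r, rfl, hr⟩

end FirstHitPath

def Stop (n m : ℕ) (lit : ℕ → ℕ → Lit) : Set Vtx := Cset n m ∪ Rinv (Rrel lit m) (EG n m)

section GameGraph

variable {n m l : ℕ} {lit : ℕ → ℕ → Lit} {u w : Vtx}

theorem notMem_stop (hg : ∀ i ≤ n - 1, u ≠ Vtx.g i := by simp) (hz : ∀ i, u ≠ Vtx.z i := by simp)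
    (hw : ∀ i j, u ≠ Vtx.w i j := by simp) : u ∉ Stop n m lit := by
  rintro ((⟨i, hi, rfl⟩ | ⟨i, -, -, rfl⟩) | ⟨_, _, i, j, -, -, -, -, (⟨_, _, h⟩ | ⟨_, _, h⟩)⟩)
  · exact hg i hi rfl
  · exact hz i rfl
  all_goals exact hw i j (congrArg Prod.fst h)

theorem z_mem_stop (h1 : 1 ≤ l) (h2 : l ≤ m) : Vtx.z l ∈ Stop n m lit :=
  .inl (.inr ⟨l, h1, h2, rfl⟩)

namespace EG

theorem eq_a_of_g_sub_one (hn : 1 ≤ n) (h : (Vtx.g (n - 1), w) ∈ EG n m) : w = Vtx.a n := by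
  simp only [EG, Set.mem_ofPred_eq] at h; grind

theorem eq_b_or_eq_c_of_a (h : (Vtx.a l, w) ∈ EG n m) : w = Vtx.b l ∨ w = Vtx.c l := by
  simp only [EG, Set.mem_ofPred_eq] at h; grind

theorem eq_e_of_b (h : (Vtx.b l, w) ∈ EG n m) : w = Vtx.e l := by
  simp only [EG, Set.mem_ofPred_eq] at h; grind

theorem eq_f_of_c (h : (Vtx.c l, w) ∈ EG n m) : w = Vtx.f l := by
  simp only [EG, Set.mem_ofPred_eq] at h; grind

theorem eq_d_of_e (h : (Vtx.e l, w) ∈ EG n m) : w = Vtx.d l := by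
  simp only [EG, Set.mem_ofPred_eq] at h; grind

theorem eq_d_of_f (h : (Vtx.f l, w) ∈ EG n m) : w = Vtx.d l := by
  simp only [EG, Set.mem_ofPred_eq] at h; grind

theorem eq_g_of_d (h : (Vtx.d l, w) ∈ EG n m) : w = Vtx.g l := by
  simp only [EG, Set.mem_ofPred_eq] at h; grind

theorem eq_x_one_of_g (hn : 1 ≤ n) (h : (Vtx.g n, w) ∈ EG n m) : w = Vtx.x 1 := by
  simp only [EG, Set.mem_ofPred_eq] at h; grind

theorem eq_y_or_eq_x_succ_of_x (h : (Vtx.x l, w) ∈ EG n m) :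
    w = Vtx.y l ∨ w = Vtx.x (l + 1) := by
  simp only [EG, Set.mem_ofPred_eq] at h; grind

theorem eq_z_of_y (h : (Vtx.y l, w) ∈ EG n m) : w = Vtx.z l ∧ 1 ≤ l ∧ l ≤ m := by
  simp only [EG, Set.mem_ofPred_eq] at h; grind

end EG

variable {v : Vtx} {q : List Vtx}

theorem IsFirstHitPath.eq_of_a
    (h : IsFirstHitPath (EG n m) (Stop n m lit) (Vtx.a l) v (Vtx.a l :: q)) :
    ∃ r, (q = Vtx.b l :: Vtx.e l :: Vtx.d l :: r ∨ q = Vtx.c l :: Vtx.f l :: Vtx.d l :: r) ∧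
      IsFirstHitPath (EG n m) (Stop n m lit) (Vtx.d l) v (Vtx.d l :: r) := by
  obtain ⟨u, q, rfl, hE, ⟨hu, -⟩ | ⟨-, hbc⟩⟩ := h.exists_eq_cons
  · rcases EG.eq_b_or_eq_c_of_a hE with rfl | rfl <;> exact absurd hu notMem_stop
  rcases EG.eq_b_or_eq_c_of_a hE with rfl | rfl
  · obtain ⟨q, rfl, he⟩ := hbc.exists_eq_cons_of_forall_succ_eq (fun _ ↦ EG.eq_e_of_b) notMem_stop
    obtain ⟨q, rfl, hd⟩ := he.exists_eq_cons_of_forall_succ_eq (fun _ ↦ EG.eq_d_of_e) notMem_stop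
    exact ⟨q, .inl rfl, hd⟩
  · obtain ⟨q, rfl, hf⟩ := hbc.exists_eq_cons_of_forall_succ_eq (fun _ ↦ EG.eq_f_of_c) notMem_stop
    obtain ⟨q, rfl, hd⟩ := hf.exists_eq_cons_of_forall_succ_eq (fun _ ↦ EG.eq_d_of_f) notMem_stop
    exact ⟨q, .inr rfl, hd⟩

theorem IsFirstHitPath.eq_of_x {i : ℕ}
    (h : IsFirstHitPath (EG n m) (Stop n m lit) (Vtx.x i) v (Vtx.x i :: q)) :
    ∃ j, 1 ≤ i + j ∧ i + j ≤ m ∧ v = Vtx.z (i + j) ∧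
      q = (List.range' (i + 1) j).map Vtx.x ++ [Vtx.y (i + j), Vtx.z (i + j)] := by
  induction q generalizing i with
  | nil => simp [IsFirstHitPath] at h
  | cons _ q ih =>
    obtain ⟨w, r, hq, hE, ⟨hw, -⟩ | ⟨-, hr⟩⟩ := h.exists_eq_cons
    · rcases EG.eq_y_or_eq_x_succ_of_x hE with rfl | rfl <;> exact absurd hw notMem_stop
    obtain ⟨rfl, rfl⟩ := List.cons_eq_cons.mp hq
    rcases EG.eq_y_or_eq_x_succ_of_x hE with rfl | rfl
    · obtain ⟨z, r, rfl, hE', ⟨-, rfl, rfl⟩ | ⟨hz, -⟩⟩ := hr.exists_eq_cons <;>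
        obtain ⟨rfl, hi1, him⟩ := EG.eq_z_of_y hE'
      · exact ⟨0, hi1, him, rfl, rfl⟩
      · exact absurd (z_mem_stop hi1 him) hz
    · obtain ⟨j, hj1, hjm, rfl, rfl⟩ := ih hr
      refine ⟨j + 1, by omega, by omega, by rw [Nat.add_right_comm, Nat.add_assoc], ?_⟩
      rw [show i + (j + 1) = i + 1 + j by omega]
      rfl

theorem IsFirstHitPath.eq_of_d (hn : 1 ≤ n)
    (h : IsFirstHitPath (EG n m) (Stop n m lit) (Vtx.d n) v (Vtx.d n :: q)) :
    ∃ i, 1 ≤ i ∧ i ≤ m ∧ v = Vtx.z i ∧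
      q = Vtx.g n :: (List.range i).map (fun k ↦ Vtx.x (k + 1)) ++ [Vtx.y i, Vtx.z i] := by
  obtain ⟨q, rfl, hg⟩ := h.exists_eq_cons_of_forall_succ_eq (fun _ ↦ EG.eq_g_of_d)
    (notMem_stop fun i hi h ↦ by cases h; omega)
  obtain ⟨q, rfl, hx⟩ :=
    hg.exists_eq_cons_of_forall_succ_eq (fun _ ↦ EG.eq_x_one_of_g hn) notMem_stop
  obtain ⟨j, hj1, hjm, rfl, rfl⟩ := hx.eq_of_x
  have hrange : (List.range (j + 1)).map (fun k ↦ Vtx.x (k + 1)) =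
      (List.range' 1 (j + 1)).map Vtx.x := by
    rw [List.range'_succ_left, ← List.range_eq_range', List.map_map]
    rfl
  rw [Nat.add_comm 1 j]
  exact ⟨j + 1, by omega, by omega, rfl, by rw [hrange]; rfl⟩

end GameGraph

theorem path_from_last_variable_component_general
    (n m : ℕ) (hn2 : 2 ≤ n)
    (lit : ℕ → ℕ → Lit)
    (p : List Vtx) (v : Vtx)
    (hplen : 2 ≤ p.length)
    (hhead : p.head? = some (Vtx.g (n - 1)))
    (hlast : p.getLast? = some v)
    (hv : v ∈ Cset n m ∪ Rinv (Rrel lit m) (EG n m))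
    (hchain : List.Chain' (fun a b => (a, b) ∈ EG n m) p)
    (hint : ∀ u ∈ (p.drop 1).dropLast, u ∉ Cset n m ∪ Rinv (Rrel lit m) (EG n m)) :
    ∃ i, 1 ≤ i ∧ i ≤ m ∧ v = Vtx.z i ∧
      (p = [Vtx.g (n - 1), Vtx.a n, Vtx.b n, Vtx.e n, Vtx.d n, Vtx.g n] ++
             ((List.range i).map fun k => Vtx.x (k + 1)) ++ [Vtx.y i, Vtx.z i] ∨
       p = [Vtx.g (n - 1), Vtx.a n, Vtx.c n, Vtx.f n, Vtx.d n, Vtx.g n] ++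
             ((List.range i).map fun k => Vtx.x (k + 1)) ++ [Vtx.y i, Vtx.z i]) := by
  have hn : 1 ≤ n := by omega
  have hg : IsFirstHitPath (EG n m) (Stop n m lit) (Vtx.g (n - 1)) v p :=
    ⟨hplen, hhead, hlast, hv, hchain, hint⟩
  obtain ⟨p, rfl⟩ := List.head?_eq_some_iff.mp hhead
  obtain ⟨p, rfl, ha⟩ :=
    hg.exists_eq_cons_of_forall_succ_eq (fun _ ↦ EG.eq_a_of_g_sub_one hn) notMem_stop
  obtain ⟨p, hp, hd⟩ := ha.eq_of_a
  obtain ⟨i, hi1, him, rfl, rfl⟩ := hd.eq_of_d hn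
  exact ⟨i, hi1, him, rfl, by rcases hp with rfl | rfl <;> simp⟩

/-- **Fact 2.** Every directed path in `G` (given by its list of vertices
`p`, with at least one edge and pairwise distinct vertices) that starts at `g_{n-1}`,
ends at a vertex `v ∈ C ∪ R⁻¹(E(G))`, and all of whose internal vertices lie outside
`C ∪ R⁻¹(E(G))`, ends at some `zᵢ` with `i ∈ {1, …, m}`, and its sequence of edges is
`(g_{n-1},aₙ)` followed by either `(aₙ,bₙ),(bₙ,eₙ),(eₙ,dₙ)` or `(aₙ,cₙ),(cₙ,fₙ),(fₙ,dₙ)`,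
followed by `(dₙ,gₙ),(gₙ,x₁),(x₁,x₂),…,(x_{i-1},xᵢ),(xᵢ,yᵢ),(yᵢ,zᵢ)`. -/
theorem path_from_last_variable_component
    (n m : ℕ) (hn : Even n) (hn2 : 2 ≤ n) (hm : 1 ≤ m)
    (lit : ℕ → ℕ → Lit) (hwf : LitWF n m lit)
    (p : List Vtx) (v : Vtx)
    (hplen : 2 ≤ p.length) (hnd : p.Nodup)
    (hhead : p.head? = some (Vtx.g (n - 1)))
    (hlast : p.getLast? = some v)
    (hv : v ∈ Cset n m ∪ Rinv (Rrel lit m) (EG n m))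
    (hchain : List.Chain' (fun a b => (a, b) ∈ EG n m) p)
    (hint : ∀ u ∈ (p.drop 1).dropLast, u ∉ Cset n m ∪ Rinv (Rrel lit m) (EG n m)) :
    ∃ i, 1 ≤ i ∧ i ≤ m ∧ v = Vtx.z i ∧
      (p = [Vtx.g (n - 1), Vtx.a n, Vtx.b n, Vtx.e n, Vtx.d n, Vtx.g n] ++
             ((List.range i).map fun k => Vtx.x (k + 1)) ++ [Vtx.y i, Vtx.z i] ∨
       p = [Vtx.g (n - 1), Vtx.a n, Vtx.c n, Vtx.f n, Vtx.d n, Vtx.g n] ++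
             ((List.range i).map fun k => Vtx.x (k + 1)) ++ [Vtx.y i, Vtx.z i]) :=
  path_from_last_variable_component_general n m hn2 lit p v hplen hhead hlast hv hchain hint

end PhutballQBF
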